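/- arXiv:2511.11742 — 6 statements merged into one kernel-verified Lean document; each statement's English description precedes it below -/
import Mathlib

section
/- Let A be the adjacency matrix of an undirected graph, d = A·1 the degree vector, and f an increasing real function defined on the spectrum of A. Let x = f(A)·1 (functional calculus applied to the symmetric matrix A). Then (dᵀx)/(1ᵀd) ≥ (1ᵀx)/n, provided 1ᵀd > 0. -/
theorem global_friendship_paradox_fA
    (n : ℕ) (hn : 0 < n) (A : Matrix (Fin n) (Fin n) ℝ)
    (hsym : A.IsSymm)
    (h01 : ∀ i j, A i j = 0 ∨ A i j = 1)
    (hdiag : ∀ i, A i i = 0)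
    (lam : Fin n → ℝ) (v : Fin n → Fin n → ℝ)
    (horth : ∀ j k, (∑ i, v j i * v k i) = if j = k then (1 : ℝ) else 0)
    (hdecomp : ∀ i k, A i k = ∑ j, lam j * v j i * v j k)
    (f : ℝ → ℝ) (hf : ∀ j k, lam j ≤ lam k → f (lam j) ≤ f (lam k))
    (d : Fin n → ℝ) (hd : d = A.mulVec (fun _ => 1))
    (hdpos : 0 < ∑ i, d i)
    (x : Fin n → ℝ) (hx : ∀ i, x i = ∑ j, f (lam j) * (∑ k, v j k) * v j i) :
    (∑ i, d i * x i) / (∑ i, d i) ≥ (∑ i, x i) / (n : ℝ) := by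
  set s : Fin n → ℝ := fun j => ∑ k, v j k with hs
  set a : Fin n → ℝ := fun j => s j * s j with ha
  -- column orthonormality
  have hcol : ∀ i k : Fin n, (∑ j, v j i * v j k) = if i = k then (1 : ℝ) else 0 := by
    set V : Matrix (Fin n) (Fin n) ℝ := Matrix.of v with hV
    have hVVt : V * Matrix.transpose V = 1 := by
      ext j k
      rw [Matrix.mul_apply]
      simp only [Matrix.transpose_apply, hV, Matrix.of_apply]
      rw [horth j k]
      simp [Matrix.one_apply]
    have hVtV : Matrix.transpose V * V = 1 := mul_eq_one_comm.mp hVVt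
    intro i k
    have := congrFun (congrFun hVtV i) k
    rw [Matrix.mul_apply] at this
    simp only [Matrix.transpose_apply, hV, Matrix.of_apply] at this
    rw [this]
    simp [Matrix.one_apply]
  -- n = ∑ a
  have hna : (n : ℝ) = ∑ j, a j := by
    have : ∑ j, a j = ∑ j, ∑ i, ∑ k, v j i * v j k := by
      apply Finset.sum_congr rfl
      intro j _
      simp only [ha, hs]
      rw [Finset.sum_mul_sum]
    rw [this, Finset.sum_comm]
    have : ∀ i : Fin n, ∑ j, ∑ k, v j i * v j k = 1 := by
      intro i
      rw [Finset.sum_comm]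
      calc ∑ k, ∑ j, v j i * v j k = ∑ k, if i = k then (1:ℝ) else 0 := by
            exact Finset.sum_congr rfl fun k _ => hcol i k
        _ = 1 := by simp
    simp [this]
  -- d expansion
  have hdexp : ∀ i, d i = ∑ j, lam j * s j * v j i := by
    intro i
    rw [hd]
    simp only [Matrix.mulVec, dotProduct, mul_one]
    calc ∑ k, A i k = ∑ k, ∑ j, lam j * v j i * v j k :=
          Finset.sum_congr rfl fun k _ => hdecomp i k
      _ = ∑ j, ∑ k, lam j * v j i * v j k := Finset.sum_comm
      _ = ∑ j, lam j * s j * v j i := by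
          apply Finset.sum_congr rfl
          intro j _
          rw [← Finset.mul_sum]
          simp only [hs]; ring
  -- sum of d
  have hsd : ∑ i, d i = ∑ j, lam j * a j := by
    simp only [hdexp]
    rw [Finset.sum_comm]
    apply Finset.sum_congr rfl
    intro j _
    rw [← Finset.mul_sum]
    simp only [ha, hs]; ring
  -- sum of x
  have hsx : ∑ i, x i = ∑ j, f (lam j) * a j := by
    simp only [hx]
    rw [Finset.sum_comm]
    apply Finset.sum_congr rfl
    intro j _
    rw [← Finset.mul_sum]
    simp only [ha, hs]; ring
  -- sum of d * x
  have hsdx : ∑ i, d i * x i = ∑ j, lam j * f (lam j) * a j := by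
    have : ∀ i, d i * x i = ∑ j, ∑ k, (lam j * s j * v j i) * (f (lam k) * s k * v k i) := by
      intro i
      rw [hdexp i, hx i]
      rw [Finset.sum_mul_sum]
    simp only [this]
    rw [Finset.sum_comm]
    apply Finset.sum_congr rfl
    intro j _
    rw [Finset.sum_comm]
    calc ∑ k, ∑ i, lam j * s j * v j i * (f (lam k) * s k * v k i)
        = ∑ k, (lam j * s j * (f (lam k) * s k)) * ∑ i, v j i * v k i := by
          apply Finset.sum_congr rfl
          intro k _
          rw [Finset.mul_sum (Finset.univ) (fun i => v j i * v k i) (lam j * s j * (f (lam k) * s k))]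
          apply Finset.sum_congr rfl
          intro i _
          ring
      _ = ∑ k, (lam j * s j * (f (lam k) * s k)) * (if j = k then (1:ℝ) else 0) := by
          simp only [horth]
      _ = lam j * f (lam j) * a j := by
          simp only [mul_ite, mul_one, mul_zero, Finset.sum_ite_eq, Finset.mem_univ, if_true]
          simp only [ha]
          ring
  -- Chebyshev sum inequality
  have hcheb : (∑ j, f (lam j) * a j) * (∑ j, lam j * a j)
      ≤ (∑ j, lam j * f (lam j) * a j) * (∑ j, a j) := by
    have key2 : (∑ j, ∑ k, a j * a k * ((lam j - lam k) * (f (lam j) - f (lam k))))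
        = 2 * ((∑ j, lam j * f (lam j) * a j) * (∑ j, a j))
          - 2 * ((∑ j, f (lam j) * a j) * (∑ j, lam j * a j)) := by
      have e1 : (∑ j, lam j * f (lam j) * a j) * (∑ j, a j)
          = ∑ j, ∑ k, (lam j * f (lam j) * a j) * a k := Finset.sum_mul_sum _ _ _ _
      have e1' : (∑ j, lam j * f (lam j) * a j) * (∑ j, a j)
          = ∑ j, ∑ k, (lam k * f (lam k) * a k) * a j := e1.trans Finset.sum_comm
      have e2 : (∑ j, f (lam j) * a j) * (∑ j, lam j * a j)
          = ∑ j, ∑ k, (f (lam j) * a j) * (lam k * a k) := Finset.sum_mul_sum _ _ _ _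
      have e2' : (∑ j, f (lam j) * a j) * (∑ j, lam j * a j)
          = ∑ j, ∑ k, (f (lam k) * a k) * (lam j * a j) := e2.trans Finset.sum_comm
      calc (∑ j, ∑ k, a j * a k * ((lam j - lam k) * (f (lam j) - f (lam k))))
          = ∑ j, ∑ k, ((lam j * f (lam j) * a j) * a k + (lam k * f (lam k) * a k) * a j
              - (f (lam j) * a j) * (lam k * a k) - (f (lam k) * a k) * (lam j * a j)) :=
            Finset.sum_congr rfl fun j _ => Finset.sum_congr rfl fun k _ => by ring
        _ = (∑ j, ∑ k, (lam j * f (lam j) * a j) * a k)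
              + (∑ j, ∑ k, (lam k * f (lam k) * a k) * a j)
              - (∑ j, ∑ k, (f (lam j) * a j) * (lam k * a k))
              - (∑ j, ∑ k, (f (lam k) * a k) * (lam j * a j)) := by
            simp only [Finset.sum_add_distrib, Finset.sum_sub_distrib]
        _ = _ := by rw [← e1, ← e1', ← e2, ← e2']; ring
    have nonneg : 0 ≤ ∑ j, ∑ k, a j * a k * ((lam j - lam k) * (f (lam j) - f (lam k))) := by
      apply Finset.sum_nonneg
      intro j _
      apply Finset.sum_nonneg
      intro k _
      have haj : 0 ≤ a j := mul_self_nonneg _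
      have hak : 0 ≤ a k := mul_self_nonneg _
      have hprod : 0 ≤ (lam j - lam k) * (f (lam j) - f (lam k)) := by
        rcases le_total (lam j) (lam k) with h | h
        · nlinarith [hf j k h]
        · exact mul_nonneg (by linarith) (by linarith [hf k j h])
      exact mul_nonneg (mul_nonneg haj hak) hprod
    linarith [key2, nonneg]
  -- finish
  have hnpos : (0:ℝ) < (n : ℝ) := by exact_mod_cast hn
  rw [ge_iff_le, div_le_div_iff₀ hnpos hdpos]
  rw [hsdx, hsx, hsd, hna]
  calc (∑ j, f (lam j) * a j) * (∑ j, lam j * a j)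
      ≤ (∑ j, lam j * f (lam j) * a j) * (∑ j, a j) := hcheb
    _ = _ := by ring
end

section
/- Let A be the adjacency matrix of a non-regular undirected connected graph, d = A·1 the degree vector, and f a strictly increasing function on the spectrum of A. Then (dᵀ f(A)·1)/(1ᵀd) > (1ᵀ f(A)·1)/n; i.e., equality in the generalized global friendship inequality for x = f(A)·1 holds if and only if the graph is regular. -/
theorem global_friendship_paradox_fA_strict
    (n : ℕ) (hn : 0 < n) (A : Matrix (Fin n) (Fin n) ℝ)
    (hsym : A.IsSymm)
    (h01 : ∀ i j, A i j = 0 ∨ A i j = 1)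
    (hdiag : ∀ i, A i i = 0)
    (hconn : ∀ i j : Fin n, ∃ k : ℕ, (A ^ k) i j ≠ 0)
    (lam : Fin n → ℝ) (v : Fin n → Fin n → ℝ)
    (horth : ∀ j k, (∑ i, v j i * v k i) = if j = k then (1 : ℝ) else 0)
    (hdecomp : ∀ i k, A i k = ∑ j, lam j * v j i * v j k)
    (f : ℝ → ℝ) (hf : ∀ j k, lam j < lam k → f (lam j) < f (lam k))
    (d : Fin n → ℝ) (hd : d = A.mulVec (fun _ => 1))
    (hdpos : 0 < ∑ i, d i)
    (hnonreg : ∃ i j, d i ≠ d j)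
    (x : Fin n → ℝ) (hx : ∀ i, x i = ∑ j, f (lam j) * (∑ k, v j k) * v j i) :
    (∑ i, d i * x i) / (∑ i, d i) > (∑ i, x i) / (n : ℝ) := by
  set c : Fin n → ℝ := fun j => ∑ k, v j k with hc
  -- completeness
  have hcomp : ∀ i k : Fin n, (∑ j, v j i * v j k) = if i = k then (1:ℝ) else 0 := by
    have hVV : (Matrix.of v) * (Matrix.of v).transpose = (1 : Matrix (Fin n) (Fin n) ℝ) := by
      ext j k
      simpa [Matrix.mul_apply, Matrix.one_apply] using horth j k
    have hVV' := mul_eq_one_comm.mp hVV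
    intro i k
    have := congrFun (congrFun hVV' i) k
    simpa [Matrix.mul_apply, Matrix.one_apply, mul_comm] using this
  -- pairing lemma
  have pairing : ∀ a b : Fin n → ℝ,
      (∑ i, (∑ j, a j * v j i) * (∑ k, b k * v k i)) = ∑ j, a j * b j := by
    intro a b
    have step1 : ∀ i : Fin n, (∑ j, a j * v j i) * (∑ k, b k * v k i)
        = ∑ j, ∑ k, (a j * b k) * (v j i * v k i) := by
      intro i
      rw [Finset.sum_mul_sum]
      apply Finset.sum_congr rfl; intro j _
      apply Finset.sum_congr rfl; intro k _
      ring
    calc (∑ i, (∑ j, a j * v j i) * (∑ k, b k * v k i))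
        = ∑ i, ∑ j, ∑ k, (a j * b k) * (v j i * v k i) := by
          exact Finset.sum_congr rfl (fun i _ => step1 i)
      _ = ∑ j, ∑ k, ∑ i, (a j * b k) * (v j i * v k i) := by
          rw [Finset.sum_comm]
          exact Finset.sum_congr rfl (fun j _ => Finset.sum_comm)
      _ = ∑ j, ∑ k, (a j * b k) * (∑ i, v j i * v k i) := by
          simp [Finset.mul_sum]
      _ = ∑ j, ∑ k, (a j * b k) * (if j = k then 1 else 0) := by
          simp only [horth]
      _ = ∑ j, a j * b j := by simp
  -- representation of 1, d, x
  have hone : ∀ i : Fin n, (∑ j, c j * v j i) = 1 := by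
    intro i
    calc (∑ j, c j * v j i) = ∑ j, ∑ k, v j i * v j k := by
          apply Finset.sum_congr rfl; intro j _
          show (∑ k, v j k) * v j i = _
          rw [Finset.sum_mul]
          exact Finset.sum_congr rfl (fun k _ => mul_comm _ _)
      _ = ∑ k, ∑ j, v j i * v j k := Finset.sum_comm
      _ = ∑ k : Fin n, if i = k then (1:ℝ) else 0 := by
          exact Finset.sum_congr rfl (fun k _ => hcomp i k)
      _ = 1 := by simp
  have hd' : ∀ i, d i = ∑ j, (lam j * c j) * v j i := by
    intro i
    rw [hd]
    calc Matrix.mulVec A (fun _ => 1) i = ∑ k, A i k := by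
          simp [Matrix.mulVec, dotProduct]
      _ = ∑ k, ∑ j, lam j * v j i * v j k := by
          exact Finset.sum_congr rfl (fun k _ => hdecomp i k)
      _ = ∑ j, ∑ k, lam j * v j i * v j k := Finset.sum_comm
      _ = ∑ j, (lam j * c j) * v j i := by
          apply Finset.sum_congr rfl; intro j _
          show _ = (lam j * ∑ k, v j k) * v j i
          rw [Finset.mul_sum, Finset.sum_mul]
          exact Finset.sum_congr rfl (fun k _ => by ring)
  have hx' : ∀ i, x i = ∑ j, (f (lam j) * c j) * v j i := by
    intro i
    exact hx i
  -- the four scalar sums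
  have hSdx : (∑ i, d i * x i) = ∑ j, (c j * c j) * (lam j * f (lam j)) := by
    calc (∑ i, d i * x i)
        = ∑ i, (∑ j, (lam j * c j) * v j i) * (∑ k, (f (lam k) * c k) * v k i) := by
          exact Finset.sum_congr rfl (fun i _ => by rw [hd' i, hx' i])
      _ = ∑ j, (lam j * c j) * (f (lam j) * c j) := pairing _ _
      _ = ∑ j, (c j * c j) * (lam j * f (lam j)) := by
          exact Finset.sum_congr rfl (fun j _ => by ring)
  have hSd : (∑ i, d i) = ∑ j, (c j * c j) * lam j := by
    calc (∑ i, d i)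
        = ∑ i, (∑ j, (lam j * c j) * v j i) * (∑ k, c k * v k i) := by
          exact Finset.sum_congr rfl (fun i _ => by rw [hd' i, hone i, mul_one])
      _ = ∑ j, (lam j * c j) * c j := pairing _ _
      _ = ∑ j, (c j * c j) * lam j := by
          exact Finset.sum_congr rfl (fun j _ => by ring)
  have hSx : (∑ i, x i) = ∑ j, (c j * c j) * f (lam j) := by
    calc (∑ i, x i)
        = ∑ i, (∑ j, (f (lam j) * c j) * v j i) * (∑ k, c k * v k i) := by
          exact Finset.sum_congr rfl (fun i _ => by rw [hx' i, hone i, mul_one])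
      _ = ∑ j, (f (lam j) * c j) * c j := pairing _ _
      _ = ∑ j, (c j * c j) * f (lam j) := by
          exact Finset.sum_congr rfl (fun j _ => by ring)
  have hN : (n : ℝ) = ∑ j, c j * c j := by
    calc (n : ℝ) = ∑ i : Fin n, (1:ℝ) := by simp
      _ = ∑ i, (∑ j, c j * v j i) * (∑ k, c k * v k i) := by
          exact Finset.sum_congr rfl (fun i _ => by rw [hone i, mul_one])
      _ = ∑ j, c j * c j := pairing _ _
  -- existence of a strict pair
  have hex : ∃ j k, c j ≠ 0 ∧ c k ≠ 0 ∧ lam j ≠ lam k := by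
    by_contra h
    push_neg at h
    obtain ⟨i0, j0, hne⟩ := hnonreg
    by_cases hz : ∀ j, c j = 0
    · have : (∑ i, d i) = 0 := by
        rw [hSd]
        apply Finset.sum_eq_zero; intro j _; rw [hz j]; ring
      linarith
    · push_neg at hz; obtain ⟨j1, hj1⟩ := hz
      have hall : ∀ i, d i = lam j1 := by
        intro i
        rw [hd' i]
        have heach : ∀ j : Fin n, (lam j * c j) * v j i = lam j1 * (c j * v j i) := by
          intro j
          by_cases hcj : c j = 0
          · rw [hcj]; ring
          · rw [h j j1 hcj hj1]; ring
        rw [Finset.sum_congr rfl (fun j _ => heach j), ← Finset.mul_sum, hone, mul_one]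
      exact hne (by rw [hall i0, hall j0])
  -- Chebyshev double sum
  set S : ℝ := ∑ j, ∑ k, ((c j * c j) * (c k * c k)) *
      ((lam j - lam k) * (f (lam j) - f (lam k))) with hS
  have hterm : ∀ j k : Fin n,
      0 ≤ ((c j * c j) * (c k * c k)) * ((lam j - lam k) * (f (lam j) - f (lam k))) := by
    intro j k
    apply mul_nonneg (mul_nonneg (mul_self_nonneg _) (mul_self_nonneg _))
    rcases lt_trichotomy (lam j) (lam k) with hlt | heq | hgt
    · have := hf j k hlt
      nlinarith
    · rw [heq]; simp
    · have := hf k j hgt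
      nlinarith
  have hSpos : 0 < S := by
    obtain ⟨j0, k0, hcj, hck, hlam⟩ := hex
    rw [hS]
    apply Finset.sum_pos'
    · intro j _
      exact Finset.sum_nonneg (fun k _ => hterm j k)
    · refine ⟨j0, Finset.mem_univ _, ?_⟩
      apply Finset.sum_pos' (fun k _ => hterm j0 k)
      refine ⟨k0, Finset.mem_univ _, ?_⟩
      apply mul_pos
      · exact mul_pos (mul_self_pos.mpr hcj) (mul_self_pos.mpr hck)
      · rcases lt_trichotomy (lam j0) (lam k0) with hlt | heq | hgt
        · have := hf j0 k0 hlt; nlinarith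
        · exact absurd heq hlam
        · have := hf k0 j0 hgt; nlinarith
  -- expand S
  have hexpand : S = 2 * ((∑ j, (c j * c j) * (lam j * f (lam j))) * (∑ j, c j * c j)
      - (∑ j, (c j * c j) * lam j) * (∑ j, (c j * c j) * f (lam j))) := by
    have e1 : (∑ j, (c j * c j) * (lam j * f (lam j))) * (∑ k, c k * c k)
        = ∑ j, ∑ k, ((c j * c j) * (lam j * f (lam j))) * (c k * c k) :=
      Finset.sum_mul_sum _ _ _ _
    have e2 : (∑ j, (c j * c j) * lam j) * (∑ k, (c k * c k) * f (lam k))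
        = ∑ j, ∑ k, ((c j * c j) * lam j) * ((c k * c k) * f (lam k)) :=
      Finset.sum_mul_sum _ _ _ _
    have e3 : (∑ j, (c j * c j) * f (lam j)) * (∑ k, (c k * c k) * lam k)
        = ∑ j, ∑ k, ((c j * c j) * f (lam j)) * ((c k * c k) * lam k) :=
      Finset.sum_mul_sum _ _ _ _
    have e4 : (∑ j, c j * c j) * (∑ k, (c k * c k) * (lam k * f (lam k)))
        = ∑ j, ∑ k, (c j * c j) * ((c k * c k) * (lam k * f (lam k))) :=
      Finset.sum_mul_sum _ _ _ _
    have hsplit : S = (∑ j, ∑ k, ((c j * c j) * (lam j * f (lam j))) * (c k * c k))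
        - (∑ j, ∑ k, ((c j * c j) * lam j) * ((c k * c k) * f (lam k)))
        - (∑ j, ∑ k, ((c j * c j) * f (lam j)) * ((c k * c k) * lam k))
        + (∑ j, ∑ k, (c j * c j) * ((c k * c k) * (lam k * f (lam k)))) := by
      rw [hS]
      rw [← Finset.sum_sub_distrib, ← Finset.sum_sub_distrib, ← Finset.sum_add_distrib]
      apply Finset.sum_congr rfl; intro j _
      rw [← Finset.sum_sub_distrib, ← Finset.sum_sub_distrib, ← Finset.sum_add_distrib]
      apply Finset.sum_congr rfl; intro k _
      ring
    rw [hsplit, ← e1, ← e2, ← e3, ← e4]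
    ring
  -- conclude
  have hn' : (0:ℝ) < (n:ℝ) := by exact_mod_cast hn
  rw [gt_iff_lt, div_lt_div_iff₀ hn' hdpos]
  rw [hSdx, hSd, hSx, hN]
  nlinarith [hSpos, hexpand]
end

section
/- Let A be the adjacency matrix of an undirected graph with 1ᵀd > 0 where d = A·1, and let ℓ be an odd positive integer. Then for x = A^ℓ·1 (walk centrality), (dᵀx)/(1ᵀd) ≥ (1ᵀx)/n, with equality if and only if the graph is regular. -/
/-!
Write `S k = 1ᵀ A^k 1`. By the spectral theorem `S k = ∑ cᵢ μᵢ^k`, where the `μᵢ` are the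
eigenvalues and `cᵢ ≥ 0` the squared coordinates of `1` in an orthonormal eigenbasis. Hence
`n · dᵀx - (1ᵀd)(1ᵀx) = S 0 · S (ℓ+1) - S 1 · S ℓ` is the `c`-weighted covariance of `μ` and `μ^ℓ`,
which is nonnegative (Chebyshev) because `t ↦ t^ℓ` is increasing. If it vanishes, `μ` is constant
on the support of `c`, so the covariance of `μ` with itself vanishes too; that covariance is
`n · dᵀd - (1ᵀd)²`, whose vanishing forces `d` to be constant. Conversely, a constant `d` has zero
covariance with any `x`.
-/

open Matrix Finset

section WeightedCov

variable {ι R : Type*} [Fintype ι]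

/-- `(∑ c)²` times the covariance of `f` and `g` under the weights `c`. -/
def weightedCov [CommRing R] (c f g : ι → R) : R :=
  (∑ i, c i) * ∑ i, c i * f i * g i - (∑ i, c i * f i) * ∑ i, c i * g i

theorem two_mul_weightedCov [CommRing R] (c f g : ι → R) :
    2 * weightedCov c f g = ∑ i, ∑ j, c i * c j * ((f i - f j) * (g i - g j)) := by
  have expand : ∀ i j, c i * c j * ((f i - f j) * (g i - g j)) =
      c i * (c j * f j * g j) - c i * f i * (c j * g j) - c i * g i * (c j * f j)
        + c i * f i * g i * c j := fun i j => by ring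
  simp only [expand, sum_add_distrib, sum_sub_distrib, ← mul_sum, ← sum_mul, weightedCov]
  ring

theorem sum_mul_div_sum_sub_sum_div_card [Field R] {f g : ι → R} (hf : ∑ i, f i ≠ 0)
    (hι : (Fintype.card ι : R) ≠ 0) :
    (∑ i, f i * g i) / ∑ i, f i - (∑ i, g i) / Fintype.card ι =
      weightedCov 1 f g / (Fintype.card ι * ∑ i, f i) := by
  simp only [weightedCov, Pi.one_apply, one_mul, sum_const, card_univ, nsmul_eq_mul, mul_one]
  field_simp

variable [CommRing R] [LinearOrder R] [IsStrictOrderedRing R]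

theorem weightedCov_nonneg {c f g : ι → R} (hc : ∀ i, 0 ≤ c i)
    (hfg : ∀ i j, 0 ≤ (f i - f j) * (g i - g j)) : 0 ≤ weightedCov c f g := by
  have h : 0 ≤ 2 * weightedCov c f g := two_mul_weightedCov c f g ▸
    sum_nonneg fun i _ => sum_nonneg fun j _ => mul_nonneg (mul_nonneg (hc i) (hc j)) (hfg i j)
  linarith

theorem weightedCov_eq_zero_iff {c f g : ι → R} (hc : ∀ i, 0 ≤ c i)
    (hfg : ∀ i j, 0 ≤ (f i - f j) * (g i - g j)) :
    weightedCov c f g = 0 ↔ ∀ i j, c i * c j * ((f i - f j) * (g i - g j)) = 0 := by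
  have hterm i j : 0 ≤ c i * c j * ((f i - f j) * (g i - g j)) :=
    mul_nonneg (mul_nonneg (hc i) (hc j)) (hfg i j)
  rw [← mul_right_inj' (two_ne_zero (α := R)), mul_zero, two_mul_weightedCov,
    sum_eq_zero_iff_of_nonneg fun i _ => sum_nonneg fun j _ => hterm i j]
  simp only [mem_univ, forall_const, sum_eq_zero_iff_of_nonneg fun j _ => hterm _ j]

theorem weightedCov_eq_zero_of_forall_eq (c : ι → R) {f : ι → R}
    (hf : ∀ i j, f i = f j) (g : ι → R) : weightedCov c f g = 0 := by
  have h : 2 * weightedCov c f g = 0 := by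
    rw [two_mul_weightedCov]
    exact sum_eq_zero fun i _ => sum_eq_zero fun j _ => by rw [hf i j, sub_self]; ring
  simpa using h

theorem weightedCov_one_self_eq_zero_iff {f : ι → R} :
    weightedCov 1 f f = 0 ↔ ∀ i j, f i = f j := by
  rw [weightedCov_eq_zero_iff (c := 1) (fun _ => zero_le_one) fun i j => mul_self_nonneg _]
  simp [sub_eq_zero]

theorem sub_mul_pow_sub_pow_nonneg {ℓ : ℕ} (hℓ : Odd ℓ) (a b : R) :
    0 ≤ (a - b) * (a ^ ℓ - b ^ ℓ) := by
  rcases le_total a b with h | h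
  · exact mul_nonneg_of_nonpos_of_nonpos (sub_nonpos.2 h) (sub_nonpos.2 (hℓ.pow_le_pow.2 h))
  · exact mul_nonneg (sub_nonneg.2 h) (sub_nonneg.2 (hℓ.pow_le_pow.2 h))

theorem weightedCov_self_eq_zero_of_weightedCov_pow {c μ : ι → R} (hc : ∀ i, 0 ≤ c i)
    {ℓ : ℕ} (hℓ : Odd ℓ) (h : weightedCov c μ (μ ^ ℓ) = 0) : weightedCov c μ μ = 0 := by
  rw [weightedCov_eq_zero_iff (g := μ ^ ℓ) hc fun i j => sub_mul_pow_sub_pow_nonneg hℓ _ _] at h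
  rw [weightedCov_eq_zero_iff hc fun i j => mul_self_nonneg _]
  intro i j
  rcases mul_eq_zero.1 (h i j) with hcc | hμ
  · simp [hcc]
  · obtain hμ | hμℓ := mul_eq_zero.1 hμ
    · simp [hμ]
    · rw [hℓ.pow_inj.1 (sub_eq_zero.1 hμℓ : μ i ^ ℓ = μ j ^ ℓ)]
      ring

end WeightedCov

namespace Matrix.IsHermitian

variable {n : Type*} [Fintype n] [DecidableEq n] {A : Matrix n n ℝ}

noncomputable def spectralWeight (hA : A.IsHermitian) (v : n → ℝ) (i : n) : ℝ :=
  (star (hA.eigenvectorUnitary : Matrix n n ℝ) *ᵥ v) i ^ 2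

theorem spectralWeight_nonneg (hA : A.IsHermitian) (v : n → ℝ) (i : n) :
    0 ≤ hA.spectralWeight v i :=
  sq_nonneg _

theorem dotProduct_pow_mulVec (hA : A.IsHermitian) (v : n → ℝ) (k : ℕ) :
    v ⬝ᵥ (A ^ k *ᵥ v) = ∑ i, hA.spectralWeight v i * hA.eigenvalues i ^ k := by
  set U : Matrix n n ℝ := (hA.eigenvectorUnitary : Matrix n n ℝ)
  have hAk : A ^ k = U * diagonal (hA.eigenvalues ^ k) * star U := by
    conv_lhs => rw [hA.spectral_theorem, ← map_pow, diagonal_pow]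
    simp [U]
  rw [hAk, ← mulVec_mulVec, dotProduct_mulVec, ← mulVec_transpose, transpose_mul,
    diagonal_transpose, ← mulVec_mulVec, star_eq_conjTranspose,
    conjTranspose_eq_transpose_of_trivial]
  simp only [dotProduct, mulVec_diagonal, Pi.pow_apply, spectralWeight, U, star_eq_conjTranspose,
    conjTranspose_eq_transpose_of_trivial]
  exact Finset.sum_congr rfl fun i _ => by ring

theorem pow_mulVec_dotProduct_pow_mulVec (hA : A.IsHermitian) (v : n → ℝ) (j k : ℕ) :
    (A ^ j *ᵥ v) ⬝ᵥ (A ^ k *ᵥ v) = v ⬝ᵥ (A ^ (j + k) *ᵥ v) := by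
  rw [← vecMul_transpose, ← dotProduct_mulVec, mulVec_mulVec, transpose_pow,
    (isHermitian_iff_isSymm.1 hA).eq, pow_add]

theorem weightedCov_pow_mulVec_one (hA : A.IsHermitian) (j k : ℕ) :
    weightedCov 1 (A ^ j *ᵥ 1) (A ^ k *ᵥ 1) =
      weightedCov (hA.spectralWeight 1) (hA.eigenvalues ^ j) (hA.eigenvalues ^ k) := by
  have hsum m : ∑ i, (A ^ m *ᵥ 1) i = ∑ i, hA.spectralWeight 1 i * hA.eigenvalues i ^ m := by
    rw [← one_dotProduct, hA.dotProduct_pow_mulVec]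
  have hcard : ∑ i : n, (1 : ℝ) = ∑ i, hA.spectralWeight 1 i := by
    simpa using hsum 0
  have hprod : ∑ i, (A ^ j *ᵥ 1) i * (A ^ k *ᵥ 1) i =
      ∑ i, hA.spectralWeight 1 i * hA.eigenvalues i ^ j * hA.eigenvalues i ^ k := by
    rw [← dotProduct, hA.pow_mulVec_dotProduct_pow_mulVec, hA.dotProduct_pow_mulVec]
    simp only [pow_add, mul_assoc]
  simp only [weightedCov, Pi.one_apply, one_mul, Pi.pow_apply, hsum, hprod, hcard]

end Matrix.IsHermitian

theorem global_friendship_paradox_walk_general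
    (n : ℕ) (A : Matrix (Fin n) (Fin n) ℝ)
    (hsym : A.IsSymm)
    (d : Fin n → ℝ) (hd : d = A.mulVec (fun _ => 1))
    (hdpos : 0 < ∑ i, d i)
    (ℓ : ℕ) (hℓodd : Odd ℓ)
    (x : Fin n → ℝ) (hx : x = (A ^ ℓ).mulVec (fun _ => 1)) :
    (∑ i, d i * x i) / (∑ i, d i) ≥ (∑ i, x i) / (n : ℝ) ∧
    ((∑ i, d i * x i) / (∑ i, d i) = (∑ i, x i) / (n : ℝ) ↔ ∀ i j, d i = d j) := by
  have hA : A.IsHermitian := isHermitian_iff_isSymm.2 hsym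
  have hn : 0 < (n : ℝ) := by
    rcases n with _ | n
    · simp at hdpos
    · positivity
  have hd₁ : d = A ^ 1 *ᵥ 1 := by rw [hd, pow_one]; rfl
  have hxℓ : x = A ^ ℓ *ᵥ 1 := hx
  have hgap : (∑ i, d i * x i) / (∑ i, d i) - (∑ i, x i) / n =
      weightedCov 1 d x / (n * ∑ i, d i) := by
    simpa using sum_mul_div_sum_sub_sum_div_card (g := x) hdpos.ne' (by simpa using hn.ne')
  have hcov : weightedCov 1 d x =
      weightedCov (hA.spectralWeight 1) hA.eigenvalues (hA.eigenvalues ^ ℓ) := by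
    rw [hd₁, hxℓ, hA.weightedCov_pow_mulVec_one, pow_one]
  have hfg i j := sub_mul_pow_sub_pow_nonneg hℓodd (hA.eigenvalues i) (hA.eigenvalues j)
  constructor
  · rw [ge_iff_le, ← sub_nonneg, hgap, hcov]
    exact div_nonneg (weightedCov_nonneg (hA.spectralWeight_nonneg 1) hfg) (by positivity)
  · rw [← sub_eq_zero, hgap, div_eq_zero_iff, or_iff_left (by positivity)]
    refine ⟨fun h => ?_, fun h => weightedCov_eq_zero_of_forall_eq 1 h x⟩
    rw [← weightedCov_one_self_eq_zero_iff, hd₁, hA.weightedCov_pow_mulVec_one, pow_one]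
    exact weightedCov_self_eq_zero_of_weightedCov_pow (hA.spectralWeight_nonneg 1) hℓodd
      (hcov ▸ h)

theorem global_friendship_paradox_walk
    (n : ℕ) (hn : 0 < n) (A : Matrix (Fin n) (Fin n) ℝ)
    (hsym : A.IsSymm)
    (h01 : ∀ i j, A i j = 0 ∨ A i j = 1)
    (hdiag : ∀ i, A i i = 0)
    (d : Fin n → ℝ) (hd : d = A.mulVec (fun _ => 1))
    (hdpos : 0 < ∑ i, d i)
    (ℓ : ℕ) (hℓpos : 0 < ℓ) (hℓodd : Odd ℓ)
    (x : Fin n → ℝ) (hx : x = (A ^ ℓ).mulVec (fun _ => 1)) :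
    (∑ i, d i * x i) / (∑ i, d i) ≥ (∑ i, x i) / (n : ℝ) ∧
    ((∑ i, d i * x i) / (∑ i, d i) = (∑ i, x i) / (n : ℝ) ↔ ∀ i j, d i = d j) :=
  global_friendship_paradox_walk_general n A hsym d hd hdpos ℓ hℓodd x hx
end

section
/- Let A be the adjacency matrix of an undirected graph with d = A·1 and 1ᵀd > 0, let 0 < α < 1/ρ(A) where ρ(A) is the spectral radius, and let x solve (I − αA)x = 1 (Katz centrality). Then (dᵀx)/(1ᵀd) ≥ (1ᵀx)/n, with equality if and only if the graph is regular. -/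
/-!
Put `B = 1 - α • A`; it is positive definite because the eigenvalues of `α • A` lie in `(-1, 1)`,
and `x = B⁻¹ 1`. The three values `1ᵀB1 = n - α (1ᵀd)`, `1ᵀBx = n`, `xᵀBx = 1ᵀx`, together with
`α (dᵀx) = 1ᵀx - n` (symmetry of `A`), show that the difference of the two averages is a positive
multiple of the Cauchy–Schwarz defect `(1ᵀB1)(xᵀBx) - (1ᵀBx)²` of the form `B`. So it is
nonnegative, and it vanishes iff `x` is a multiple of `1`, i.e. iff `1` is an eigenvector of `B`,
i.e. iff all degrees are equal.
-/

open Matrix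

variable {ι : Type*}

section

variable [Fintype ι]

lemma Matrix.IsSymm.posDef_one_sub_smul [DecidableEq ι] {A : Matrix ι ι ℝ} (hA : A.IsSymm)
    {α : ℝ} (hα : 0 < α) (hspec : ∀ μ ∈ spectrum ℝ A, α * |μ| < 1) : (1 - α • A).PosDef := by
  have hB : (1 - α • A).IsHermitian := by
    simpa [isHermitian_iff_isSymm] using isSymm_one.sub (hA.smul α)
  have hpos : ∀ t ∈ spectrum ℝ (1 - α • A), 0 < t := by
    rw [← map_one (algebraMap ℝ (Matrix ι ι ℝ)), ← spectrum.singleton_sub_eq,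
      ← Units.val_mk0 hα.ne', ← Units.smul_def, spectrum.unit_smul_eq_smul]
    rintro _ ⟨_, rfl, _, ⟨μ, hμ, rfl⟩, rfl⟩
    simp only [Units.val_mk0, smul_eq_mul, sub_pos]
    exact (mul_le_mul_of_nonneg_left (le_abs_self μ) hα.le).trans_lt (hspec μ hμ)
  exact hB.posDef_iff_eigenvalues_pos.mpr fun i => hpos _ (hB.eigenvalues_mem_spectrum_real i)

namespace Matrix.PosDef

variable {B : Matrix ι ι ℝ}

lemma dotProduct_mulVec_comm (hB : B.PosDef) (u v : ι → ℝ) : u ⬝ᵥ B *ᵥ v = v ⬝ᵥ B *ᵥ u := by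
  rw [dotProduct_mulVec, ← mulVec_transpose, dotProduct_comm,
    (isHermitian_iff_isSymm.mp hB.isHermitian).eq]

lemma dotProduct_mulVec_self_pos (hB : B.PosDef) {v : ι → ℝ} (hv : v ≠ 0) :
    0 < v ⬝ᵥ B *ᵥ v := by
  simpa using hB.dotProduct_mulVec_pos hv

lemma dotProduct_mulVec_self_nonneg (hB : B.PosDef) (v : ι → ℝ) : 0 ≤ v ⬝ᵥ B *ᵥ v := by
  simpa using hB.posSemidef.dotProduct_mulVec_nonneg v

lemma dotProduct_mulVec_cauchySchwarz_residual (hB : B.PosDef) (u v : ι → ℝ) :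
    let w := (u ⬝ᵥ B *ᵥ u) • v - (u ⬝ᵥ B *ᵥ v) • u
    w ⬝ᵥ B *ᵥ w = (u ⬝ᵥ B *ᵥ u) * ((u ⬝ᵥ B *ᵥ u) * (v ⬝ᵥ B *ᵥ v) - (u ⬝ᵥ B *ᵥ v) ^ 2) := by
  simp only [mulVec_sub, mulVec_smul, sub_dotProduct, dotProduct_sub, smul_dotProduct,
    dotProduct_smul, smul_eq_mul, hB.dotProduct_mulVec_comm v u]
  ring

lemma sq_dotProduct_mulVec_le (hB : B.PosDef) (u v : ι → ℝ) :
    (u ⬝ᵥ B *ᵥ v) ^ 2 ≤ (u ⬝ᵥ B *ᵥ u) * (v ⬝ᵥ B *ᵥ v) := by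
  rcases eq_or_ne u 0 with rfl | hu
  · simp
  have hres := hB.dotProduct_mulVec_cauchySchwarz_residual u v
  have hw := hB.dotProduct_mulVec_self_nonneg ((u ⬝ᵥ B *ᵥ u) • v - (u ⬝ᵥ B *ᵥ v) • u)
  have huu := hB.dotProduct_mulVec_self_pos hu
  nlinarith

lemma sq_dotProduct_mulVec_eq_iff (hB : B.PosDef) {u : ι → ℝ} (hu : u ≠ 0) (v : ι → ℝ) :
    (u ⬝ᵥ B *ᵥ v) ^ 2 = (u ⬝ᵥ B *ᵥ u) * (v ⬝ᵥ B *ᵥ v) ↔ ∃ c : ℝ, v = c • u := by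
  constructor
  · intro h
    have hw : (u ⬝ᵥ B *ᵥ u) • v - (u ⬝ᵥ B *ᵥ v) • u = 0 := by
      by_contra hw
      have := hB.dotProduct_mulVec_self_pos hw
      rw [hB.dotProduct_mulVec_cauchySchwarz_residual, h, sub_self, mul_zero] at this
      exact this.false
    refine ⟨(u ⬝ᵥ B *ᵥ v) / (u ⬝ᵥ B *ᵥ u), ?_⟩
    rw [sub_eq_zero] at hw
    rw [div_eq_inv_mul, mul_smul, ← hw, inv_smul_smul₀ (hB.dotProduct_mulVec_self_pos hu).ne']
  · rintro ⟨c, rfl⟩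
    simp only [mulVec_smul, dotProduct_smul, smul_dotProduct, smul_eq_mul]
    ring

end Matrix.PosDef

lemma Matrix.exists_eq_smul_iff_exists_mulVec_eq_smul {K : Type*} [Field K] {B : Matrix ι ι K}
    (hB : Function.Injective B.mulVec) {x u : ι → K} (hx : B *ᵥ x = u) (hu : u ≠ 0) :
    (∃ c : K, x = c • u) ↔ ∃ μ : K, B *ᵥ u = μ • u := by
  constructor
  · rintro ⟨c, rfl⟩
    rw [mulVec_smul] at hx
    have hc : c ≠ 0 := by
      rintro rfl
      exact hu (by rw [← hx, zero_smul])
    exact ⟨c⁻¹, (eq_inv_smul_iff₀ hc).mpr hx⟩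
  · rintro ⟨μ, hμ⟩
    have hμ0 : μ ≠ 0 := by
      rintro rfl
      exact hu (hB (by rw [hμ, zero_smul, mulVec_zero]))
    refine ⟨μ⁻¹, hB ?_⟩
    rw [hx, mulVec_smul, hμ, inv_smul_smul₀ hμ0]

end

lemma exists_one_sub_smul_eq_smul_one_iff [Nonempty ι] {α : ℝ} (hα : α ≠ 0) (d : ι → ℝ) :
    (∃ μ : ℝ, 1 - α • d = μ • 1) ↔ ∀ i j, d i = d j := by
  constructor
  · rintro ⟨μ, hμ⟩ i j
    have hi := congrFun hμ i
    have hj := congrFun hμ j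
    simp only [Pi.sub_apply, Pi.one_apply, Pi.smul_apply, smul_eq_mul] at hi hj
    exact mul_left_cancel₀ hα (by linarith)
  · intro h
    obtain ⟨i₀⟩ := ‹Nonempty ι›
    refine ⟨1 - α * d i₀, funext fun i => ?_⟩
    simp [h i i₀]

theorem global_friendship_paradox_katz_general
    (n : ℕ) (A : Matrix (Fin n) (Fin n) ℝ)
    (hsym : A.IsSymm)
    (d : Fin n → ℝ) (hd : d = A.mulVec (fun _ => 1))
    (hdpos : 0 < ∑ i, d i)
    (α : ℝ) (hα : 0 < α)
    (hspec : ∀ μ ∈ spectrum ℝ A, α * |μ| < 1)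
    (x : Fin n → ℝ) (hx : (1 - α • A).mulVec x = (fun _ => 1)) :
    (∑ i, d i * x i) / (∑ i, d i) ≥ (∑ i, x i) / (n : ℝ) ∧
    ((∑ i, d i * x i) / (∑ i, d i) = (∑ i, x i) / (n : ℝ) ↔ ∀ i j, d i = d j) := by
  have : Nonempty (Fin n) := Finset.univ_nonempty_iff.mp (Finset.nonempty_of_sum_ne_zero hdpos.ne')
  have hn : (0 : ℝ) < n := by exact_mod_cast Fin.pos_iff_nonempty.mpr this
  set B := 1 - α • A
  have hB : B.PosDef := hsym.posDef_one_sub_smul hα hspec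
  replace hx : B *ᵥ x = 1 := hx
  have hB1 : B *ᵥ 1 = 1 - α • d := by rw [hd, sub_mulVec, one_mulVec, smul_mulVec]; rfl
  have hS : x ⬝ᵥ B *ᵥ x = ∑ i, x i := by rw [hx, dotProduct_one]
  have hN : 1 ⬝ᵥ B *ᵥ x = n := by rw [hx, one_dotProduct_one, Fintype.card_fin]
  have hT : 1 ⬝ᵥ B *ᵥ 1 = n - α * ∑ i, d i := by
    rw [hB1, dotProduct_sub, one_dotProduct_one, Fintype.card_fin, dotProduct_smul,
      one_dotProduct, smul_eq_mul]
  have hdx : α * ∑ i, d i * x i = ∑ i, x i - n :=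
    calc α * ∑ i, d i * x i = x ⬝ᵥ (1 - B *ᵥ 1) := by
          rw [hB1, sub_sub_cancel, dotProduct_smul, dotProduct_comm, smul_eq_mul]; rfl
      _ = ∑ i, x i - n := by
          rw [dotProduct_sub, dotProduct_one, hB.dotProduct_mulVec_comm x 1, hN]
  have hgap : (∑ i, d i * x i) / (∑ i, d i) - (∑ i, x i) / n =
      ((1 ⬝ᵥ B *ᵥ 1) * (x ⬝ᵥ B *ᵥ x) - (1 ⬝ᵥ B *ᵥ x) ^ 2) / (α * (∑ i, d i) * n) := by
    rw [hT, hS, hN]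
    field_simp
    linear_combination (n : ℝ) * hdx
  have hden : 0 < α * (∑ i, d i) * n := by positivity
  refine ⟨sub_nonneg.mp ?_, ?_⟩
  · rw [hgap]
    exact div_nonneg (sub_nonneg.mpr (hB.sq_dotProduct_mulVec_le 1 x)) hden.le
  · rw [← sub_eq_zero, hgap, div_eq_zero_iff, or_iff_left hden.ne', sub_eq_zero, eq_comm,
      hB.sq_dotProduct_mulVec_eq_iff one_ne_zero,
      exists_eq_smul_iff_exists_mulVec_eq_smul (mulVec_injective_iff_isUnit.mpr hB.isUnit) hx
        one_ne_zero, hB1, exists_one_sub_smul_eq_smul_one_iff hα.ne']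

theorem global_friendship_paradox_katz
    (n : ℕ) (hn : 0 < n) (A : Matrix (Fin n) (Fin n) ℝ)
    (hsym : A.IsSymm)
    (h01 : ∀ i j, A i j = 0 ∨ A i j = 1)
    (hdiag : ∀ i, A i i = 0)
    (d : Fin n → ℝ) (hd : d = A.mulVec (fun _ => 1))
    (hdpos : 0 < ∑ i, d i)
    (α : ℝ) (hα : 0 < α)
    (hspec : ∀ μ ∈ spectrum ℝ A, α * |μ| < 1)
    (x : Fin n → ℝ) (hx : (1 - α • A).mulVec x = (fun _ => 1)) :
    (∑ i, d i * x i) / (∑ i, d i) ≥ (∑ i, x i) / (n : ℝ) ∧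
    ((∑ i, d i * x i) / (∑ i, d i) = (∑ i, x i) / (n : ℝ) ↔ ∀ i j, d i = d j) :=
  global_friendship_paradox_katz_general n A hsym d hd hdpos α hα hspec x hx
end

section
/- Let A be the adjacency matrix of an undirected graph with d = A·1 and 1ᵀd > 0, and let x = exp(A)·1 be the total subgraph communicability vector. Then (dᵀx)/(1ᵀd) ≥ (1ᵀx)/n, with equality if and only if the graph is regular. -/
/-!
Diagonalise `A = U diag(λ) Uᵀ` and put `w_k = ((Uᵀ 1)_k)²`. Then `n = ∑ w_k`, `1ᵀd = ∑ w_k λ_k`,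
`1ᵀx = ∑ w_k e^{λ_k}` and `dᵀx = ∑ w_k λ_k e^{λ_k}`, so the claim is the weighted Chebyshev
inequality for the similarly ordered sequences `λ_k` and `e^{λ_k}`. Since `exp` is strictly
increasing, equality holds exactly when `λ` is constant on the support of `w`, i.e. when `1` is an
eigenvector of `A`, i.e. when the graph is regular.
-/

open scoped Matrix

theorem StrictMono.sub_mul_sub_eq_zero_iff {f : ℝ → ℝ} (hf : StrictMono f) {a b : ℝ} :
    (f a - f b) * (a - b) = 0 ↔ a = b := by
  simp [mul_eq_zero, sub_eq_zero, hf.injective.eq_iff]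

namespace Finset

variable {ι : Type*} {s : Finset ι} {w μ : ι → ℝ}

theorem exists_sum_mul_eq_sum_mul_of_nonneg (hw : ∀ i ∈ s, 0 ≤ w i) :
    ∃ m, ∑ i ∈ s, w i * μ i = (∑ i ∈ s, w i) * m := by
  by_cases hW : ∑ i ∈ s, w i = 0
  · refine ⟨0, ?_⟩
    rw [hW, zero_mul]
    exact sum_eq_zero fun i hi => by rw [(sum_eq_zero_iff_of_nonneg hw).1 hW i hi, zero_mul]
  · exact ⟨_, (mul_div_cancel₀ _ hW).symm⟩

/-- The hypothesis makes `m` the `w`-weighted mean of `μ`. -/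
theorem sum_mul_sum_sub_sum_mul_sum_eq {m : ℝ} (hm : ∑ i ∈ s, w i * μ i = (∑ i ∈ s, w i) * m)
    (f : ℝ → ℝ) :
    (∑ i ∈ s, w i) * ∑ i ∈ s, w i * (μ i * f (μ i)) -
        (∑ i ∈ s, w i * μ i) * ∑ i ∈ s, w i * f (μ i) =
      (∑ i ∈ s, w i) * ∑ i ∈ s, w i * ((f (μ i) - f m) * (μ i - m)) := by
  have hexpand : ∑ i ∈ s, w i * ((f (μ i) - f m) * (μ i - m)) =
      ∑ i ∈ s, w i * (μ i * f (μ i)) - f m * ∑ i ∈ s, w i * μ i -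
        m * ∑ i ∈ s, w i * f (μ i) + m * f m * ∑ i ∈ s, w i := by
    simp only [mul_sum, ← sum_sub_distrib, ← sum_add_distrib]
    exact sum_congr rfl fun i _ => by ring
  rw [hexpand]
  linear_combination (f m * ∑ i ∈ s, w i - ∑ i ∈ s, w i * f (μ i)) * hm

theorem sum_mul_sum_le_sum_mul_sum (hw : ∀ i ∈ s, 0 ≤ w i) {f : ℝ → ℝ} (hf : Monotone f) :
    (∑ i ∈ s, w i * μ i) * ∑ i ∈ s, w i * f (μ i) ≤
      (∑ i ∈ s, w i) * ∑ i ∈ s, w i * (μ i * f (μ i)) := by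
  obtain ⟨m, hm⟩ := exists_sum_mul_eq_sum_mul_of_nonneg (μ := μ) hw
  rw [← sub_nonneg, sum_mul_sum_sub_sum_mul_sum_eq hm]
  exact mul_nonneg (sum_nonneg hw) <| sum_nonneg fun i hi =>
    mul_nonneg (hw i hi) ((monovary_id_iff.2 hf).sub_mul_sub_nonneg m (μ i))

theorem sum_mul_sum_eq_sum_mul_sum_iff (hw : ∀ i ∈ s, 0 ≤ w i) {f : ℝ → ℝ} (hf : StrictMono f) :
    (∑ i ∈ s, w i * μ i) * ∑ i ∈ s, w i * f (μ i) =
        (∑ i ∈ s, w i) * ∑ i ∈ s, w i * (μ i * f (μ i)) ↔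
      ∃ c, ∀ i ∈ s, w i ≠ 0 → μ i = c := by
  constructor
  · intro h
    obtain ⟨m, hm⟩ := exists_sum_mul_eq_sum_mul_of_nonneg (μ := μ) hw
    have hterm : ∀ i ∈ s, 0 ≤ w i * ((f (μ i) - f m) * (μ i - m)) :=
      fun i hi => mul_nonneg (hw i hi)
        ((monovary_id_iff.2 hf.monotone).sub_mul_sub_nonneg m (μ i))
    refine ⟨m, fun i hi hwi => ?_⟩
    have hW : 0 < ∑ i ∈ s, w i := ((hw i hi).lt_of_ne' hwi).trans_le (single_le_sum hw hi)
    rw [eq_comm, ← sub_eq_zero, sum_mul_sum_sub_sum_mul_sum_eq hm, mul_eq_zero,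
      or_iff_right hW.ne', sum_eq_zero_iff_of_nonneg hterm] at h
    exact hf.sub_mul_sub_eq_zero_iff.1 ((mul_eq_zero.1 (h i hi)).resolve_left hwi)
  · rintro ⟨c, hc⟩
    have hconst (g : ℝ → ℝ) : ∑ i ∈ s, w i * g (μ i) = (∑ i ∈ s, w i) * g c := by
      rw [sum_mul]
      refine sum_congr rfl fun i hi => ?_
      rcases eq_or_ne (w i) 0 with h | h
      · rw [h, zero_mul, zero_mul]
      · rw [hc i hi h]
    have hμ := hconst id
    have hμf := hconst fun t => t * f t
    simp only [id] at hμ hμf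
    rw [hconst f, hμ, hμf]
    ring

end Finset

namespace Matrix.IsHermitian

variable {ι : Type*} [Fintype ι] [DecidableEq ι] {A : Matrix ι ι ℝ}

theorem exp_eq_cfc (hA : A.IsHermitian) : NormedSpace.exp A = cfc Real.exp A := by
  have hinv : (hA.eigenvectorUnitary : Matrix ι ι ℝ)⁻¹ =
      star (hA.eigenvectorUnitary : Matrix ι ι ℝ) :=
    inv_eq_left_inv (Unitary.coe_star_mul_self _)
  rw [hA.cfc_eq, IsHermitian.cfc, Unitary.conjStarAlgAut_apply]
  conv_lhs => rw [hA.spectral_theorem, Unitary.conjStarAlgAut_apply, ← hinv,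
    exp_conj _ _ Unitary.isUnit_coe, exp_diagonal, hinv]
  simp only [RCLike.ofReal_real_eq_id, Function.id_comp, Real.exp_eq_exp_ℝ, Pi.exp_def]
  rfl

theorem cfc_mulVec_dotProduct_cfc_mulVec (hA : A.IsHermitian) (f g : ℝ → ℝ) (v : ι → ℝ) :
    (cfc f A *ᵥ v) ⬝ᵥ (cfc g A *ᵥ v) =
      ∑ k, (star (hA.eigenvectorUnitary : Matrix ι ι ℝ) *ᵥ v) k ^ 2 *
        (f (hA.eigenvalues k) * g (hA.eigenvalues k)) := by
  have hU : (hA.eigenvectorUnitary : Matrix ι ι ℝ)ᵀ * hA.eigenvectorUnitary = 1 := by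
    simpa [star_eq_conjTranspose] using Unitary.coe_star_mul_self hA.eigenvectorUnitary
  simp only [hA.cfc_eq, IsHermitian.cfc, Unitary.conjStarAlgAut_apply, ← mulVec_mulVec]
  rw [dotProduct_mulVec, ← vecMul_transpose, vecMul_vecMul, hU, vecMul_one]
  simp only [dotProduct, mulVec_diagonal, Function.comp_apply, RCLike.ofReal_real_eq_id, id]
  exact Finset.sum_congr rfl fun k _ => by ring

theorem mulVec_eq_smul_iff (hA : A.IsHermitian) (v : ι → ℝ) (c : ℝ) :
    A *ᵥ v = c • v ↔
      ∀ k, (star (hA.eigenvectorUnitary : Matrix ι ι ℝ) *ᵥ v) k ≠ 0 → hA.eigenvalues k = c := by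
  have hshift : cfc (fun t => t - c) A *ᵥ v = A *ᵥ v - c • v := by
    rw [cfc_sub _ _ A, cfc_id' ℝ A, cfc_const c A, sub_mulVec, Algebra.algebraMap_eq_smul_one,
      smul_mulVec, one_mulVec]
  rw [← sub_eq_zero, ← hshift, ← dotProduct_self_eq_zero, hA.cfc_mulVec_dotProduct_cfc_mulVec,
    Finset.sum_eq_zero_iff_of_nonneg fun k _ => mul_nonneg (sq_nonneg _) (mul_self_nonneg _)]
  simp [sub_eq_zero, or_iff_not_imp_left]

end Matrix.IsHermitian

theorem forall_apply_eq_apply_iff_exists_eq_const {α β : Type*} [Nonempty α] {f : α → β} :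
    (∀ i j, f i = f j) ↔ ∃ c, f = fun _ => c := by
  refine ⟨fun h => ⟨f (Classical.arbitrary α), funext fun i => h _ _⟩, ?_⟩
  rintro ⟨c, rfl⟩ i j
  rfl

theorem global_friendship_paradox_communicability_general
    (n : ℕ) (A : Matrix (Fin n) (Fin n) ℝ)
    (hsym : A.IsSymm)
    (d : Fin n → ℝ) (hd : d = A.mulVec (fun _ => 1))
    (hdpos : 0 < ∑ i, d i)
    (x : Fin n → ℝ) (hx : x = (NormedSpace.exp A).mulVec (fun _ => 1)) :
    (∑ i, d i * x i) / (∑ i, d i) ≥ (∑ i, x i) / (n : ℝ) ∧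
    ((∑ i, d i * x i) / (∑ i, d i) = (∑ i, x i) / (n : ℝ) ↔ ∀ i j, d i = d j) := by
  have hA : A.IsHermitian := Matrix.isHermitian_iff_isSymm.2 hsym
  have hn : 0 < n := Nat.pos_of_ne_zero (by rintro rfl; simp at hdpos)
  have : Nonempty (Fin n) := ⟨⟨0, hn⟩⟩
  set μ := hA.eigenvalues
  set w : Fin n → ℝ := fun k =>
    (star (↑hA.eigenvectorUnitary : Matrix (Fin n) (Fin n) ℝ) *ᵥ fun _ => 1) k ^ 2
  have quad := hA.cfc_mulVec_dotProduct_cfc_mulVec (v := fun _ => 1)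
  have hN : (n : ℝ) = ∑ k, w k := by
    simpa [cfc_const_one ℝ A, dotProduct] using quad (fun _ => 1) (fun _ => 1)
  have hD : ∑ i, d i = ∑ k, w k * μ k := by
    simpa [cfc_const_one ℝ A, cfc_id ℝ A, ← hd, dotProduct] using quad (fun _ => 1) id
  have hX : ∑ i, x i = ∑ k, w k * Real.exp (μ k) := by
    simpa [cfc_const_one ℝ A, ← hA.exp_eq_cfc, ← hx, dotProduct] using quad (fun _ => 1) Real.exp
  have hDX : ∑ i, d i * x i = ∑ k, w k * (μ k * Real.exp (μ k)) := by
    simpa [cfc_id ℝ A, ← hA.exp_eq_cfc, ← hd, ← hx, dotProduct] using quad id Real.exp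
  have hreg : (∀ i j, d i = d j) ↔ ∃ c, ∀ k ∈ Finset.univ, w k ≠ 0 → μ k = c := by
    rw [forall_apply_eq_apply_iff_exists_eq_const]
    refine exists_congr fun c => ?_
    have hc : (fun _ => c) = c • fun _ : Fin n => (1 : ℝ) := funext fun _ => (mul_one c).symm
    rw [hc, hd, hA.mulVec_eq_smul_iff]
    simp [w, μ]
  have hw : ∀ k ∈ Finset.univ, 0 ≤ w k := fun k _ => sq_nonneg _
  rw [ge_iff_le, div_le_div_iff₀ (Nat.cast_pos.2 hn) hdpos,
    div_eq_div_iff hdpos.ne' (Nat.cast_pos.2 hn).ne', hreg,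
    ← Finset.sum_mul_sum_eq_sum_mul_sum_iff hw Real.exp_strictMono, hN, hD, hX, hDX]
  constructor
  · linarith [Finset.sum_mul_sum_le_sum_mul_sum hw Real.exp_monotone (μ := μ)]
  · constructor <;> intro h <;> linarith

theorem global_friendship_paradox_communicability
    (n : ℕ) (hn : 0 < n) (A : Matrix (Fin n) (Fin n) ℝ)
    (hsym : A.IsSymm)
    (h01 : ∀ i j, A i j = 0 ∨ A i j = 1)
    (hdiag : ∀ i, A i i = 0)
    (d : Fin n → ℝ) (hd : d = A.mulVec (fun _ => 1))
    (hdpos : 0 < ∑ i, d i)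
    (x : Fin n → ℝ) (hx : x = (NormedSpace.exp A).mulVec (fun _ => 1)) :
    (∑ i, d i * x i) / (∑ i, d i) ≥ (∑ i, x i) / (n : ℝ) ∧
    ((∑ i, d i * x i) / (∑ i, d i) = (∑ i, x i) / (n : ℝ) ↔ ∀ i j, d i = d j) :=
  global_friendship_paradox_communicability_general n A hsym d hd hdpos x hx
end

section
/- Let A be the adjacency matrix of an undirected graph with all degrees d_i ≥ 1, D = diag(d). Suppose (v_a; v_b) is an eigenvector of [[A, I−D],[I, 0]] with eigenvalue λ ≥ 1, where v_a and v_b are entrywise nonnegative and 1ᵀv_a = 1. Then 1ᵀ(D⁻¹ A v_a − v_a) ≥ 0 (the generalized local friendship inequality holds for nonbacktracking eigenvector centrality). -/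
/-!
Write `x = v_a`. The second block row gives `x = λ v_b`, so `λ` times the first one reads
`λ (A x)ᵢ = (λ² - 1) xᵢ + dᵢ xᵢ`. Summing over `i` (the column sums of the symmetric `A` are the
degrees) gives `λ T = λ² - 1 + T` for `T = Σ dᵢ xᵢ`, while dividing by `dᵢ` first gives
`λ Σ (A x)ᵢ / dᵢ = (λ² - 1) S + 1` for `S = Σ xᵢ / dᵢ`. Hence
`λ (Σ (A x)ᵢ / dᵢ - 1) = (λ - 1)(T S - 1)`, which is nonnegative by the AM–HM inequality `T S ≥ 1`.
-/

open Matrix Finset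

section

variable {ι : Type*} [Fintype ι]

theorem Matrix.IsSymm.sum_mulVec {R : Type*} [CommSemiring R] {A : Matrix ι ι R} (hA : A.IsSymm)
    (x : ι → R) : ∑ i, (A *ᵥ x) i = ∑ i, (A *ᵥ fun _ => 1) i * x i := by
  simp only [mulVec, dotProduct, mul_one, sum_mul]
  rw [sum_comm]
  exact sum_congr rfl fun i _ => sum_congr rfl fun j _ => by rw [hA.apply]

theorem one_le_sum_mul_mul_sum_div {w d : ι → ℝ} (hw : ∀ i, 0 ≤ w i) (hw1 : ∑ i, w i = 1)
    (hd : ∀ i, 0 < d i) : 1 ≤ (∑ i, d i * w i) * ∑ i, w i / d i := by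
  have h := sum_sq_le_sum_mul_sum_of_sq_le_mul univ (r := w)
    (fun i _ => mul_nonneg (hd i).le (hw i)) (fun i _ => div_nonneg (hw i) (hd i).le)
    (fun i _ => le_of_eq (by field_simp [(hd i).ne']))
  rwa [hw1, one_pow] at h

variable [DecidableEq ι]

theorem nonbacktracking_eigen_blocks {R : Type*} [CommRing R] {A : Matrix ι ι R}
    {d x y : ι → R} {lam : R}
    (h : fromBlocks A (1 - diagonal d) 1 0 *ᵥ Sum.elim x y = lam • Sum.elim x y) :
    A *ᵥ x + y - d * y = lam • x ∧ x = lam • y := by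
  rw [fromBlocks_mulVec] at h
  refine ⟨funext fun i => ?_, funext fun i => ?_⟩
  · simpa [sub_mulVec, mulVec_diagonal, ← add_sub_assoc] using congrFun h (Sum.inl i)
  · simpa using congrFun h (Sum.inr i)

theorem mul_mulVec_apply_of_nonbacktracking_eigen {R : Type*} [CommRing R] {A : Matrix ι ι R}
    {d x y : ι → R} {lam : R}
    (h : fromBlocks A (1 - diagonal d) 1 0 *ᵥ Sum.elim x y = lam • Sum.elim x y) (i : ι) :
    lam * (A *ᵥ x) i = (lam ^ 2 - 1) * x i + d i * x i := by
  obtain ⟨hx, hy⟩ := nonbacktracking_eigen_blocks h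
  have hxi := congrFun hx i
  simp only [hy, Pi.add_apply, Pi.sub_apply, Pi.mul_apply, Pi.smul_apply, smul_eq_mul] at hxi ⊢
  linear_combination lam * hxi

end

theorem local_nonbacktracking_paradox_general
    (n : ℕ) (A : Matrix (Fin n) (Fin n) ℝ)
    (hsym : A.IsSymm)
    (d : Fin n → ℝ) (hd : d = A.mulVec (fun _ => 1))
    (hdeg : ∀ i, 1 ≤ d i)
    (lam : ℝ) (hlam : 1 ≤ lam)
    (va vb : Fin n → ℝ)
    (hva : ∀ i, 0 ≤ va i)
    (hnorm : ∑ i, va i = 1)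
    (heig : (Matrix.fromBlocks A (1 - Matrix.diagonal d) 1 0).mulVec
      (Sum.elim va vb) = lam • Sum.elim va vb) :
    (∑ i, (∑ j, A i j * va j) / d i) - ∑ i, va i ≥ 0 := by
  have hd0 : ∀ i, 0 < d i := fun i => one_pos.trans_le (hdeg i)
  have hAva := mul_mulVec_apply_of_nonbacktracking_eigen heig
  have hsum : ∑ i, (A *ᵥ va) i = ∑ i, d i * va i := hd ▸ hsym.sum_mulVec va
  have hTS := one_le_sum_mul_mul_sum_div hva hnorm hd0
  set S := ∑ i, va i / d i
  set T := ∑ i, d i * va i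
  have hT : lam * T = lam ^ 2 - 1 + T := by
    rw [← hsum, mul_sum, sum_congr rfl fun i _ => hAva i, sum_add_distrib, ← mul_sum, hnorm,
      mul_one, hsum]
  have hS : lam * ∑ i, (∑ j, A i j * va j) / d i = (lam ^ 2 - 1) * S + 1 := by
    have hterm : ∀ i, lam * ((A *ᵥ va) i / d i) = (lam ^ 2 - 1) * (va i / d i) + va i :=
      fun i => by rw [mul_div_assoc', hAva]; field_simp [(hd0 i).ne']
    change lam * ∑ i, (A *ᵥ va) i / d i = _
    rw [mul_sum, sum_congr rfl fun i _ => hterm i, sum_add_distrib, ← mul_sum, hnorm]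
  have hST : (lam ^ 2 - 1) * S = (lam - 1) * (T * S) := by linear_combination (-S) * hT
  rw [hnorm, ge_iff_le, sub_nonneg, ← mul_le_mul_iff_of_pos_left (one_pos.trans_le hlam), hS,
    mul_one, hST]
  linarith [mul_le_mul_of_nonneg_left hTS (sub_nonneg.2 hlam)]

theorem local_nonbacktracking_paradox
    (n : ℕ) (hn : 0 < n) (A : Matrix (Fin n) (Fin n) ℝ)
    (hsym : A.IsSymm)
    (h01 : ∀ i j, A i j = 0 ∨ A i j = 1)
    (hdiag : ∀ i, A i i = 0)
    (d : Fin n → ℝ) (hd : d = A.mulVec (fun _ => 1))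
    (hdeg : ∀ i, 1 ≤ d i)
    (lam : ℝ) (hlam : 1 ≤ lam)
    (va vb : Fin n → ℝ)
    (hva : ∀ i, 0 ≤ va i) (hvb : ∀ i, 0 ≤ vb i)
    (hnorm : ∑ i, va i = 1)
    (heig : (Matrix.fromBlocks A (1 - Matrix.diagonal d) 1 0).mulVec
      (Sum.elim va vb) = lam • Sum.elim va vb) :
    (∑ i, (∑ j, A i j * va j) / d i) - ∑ i, va i ≥ 0 :=
  local_nonbacktracking_paradox_general n A hsym d hd hdeg lam hlam va vb hva hnorm heig
end
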